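/- arXiv:1111.3252 — 5 statements merged into one kernel-verified Lean document; each statement's English description precedes it below -/
import Mathlib

section
/- Let S be a family of k-element subsets of [n] with n ≥ 2k+1 such that: (i) for all distinct a, b ∈ [n], the subfamily of sets in S containing a differs from the subfamily containing b, and (ii) at most one element of [n] lies in no member of S. Then S is a determining set of the Kneser graph K_{n:k}. -/
/-- A set `S` of vertices is a determining set of `G` if any two automorphisms
agreeing on `S` are equal. -/
def IsDeterminingSet {V : Type*} (G : SimpleGraph V) (S : Set V) : Prop :=
  ∀ g h : G ≃g G, (∀ v ∈ S, g v = h v) → g = h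

/-- The determining number of a graph: the minimum cardinality of a determining set. -/
noncomputable def detNumber {V : Type*} (G : SimpleGraph V) : ℕ :=
  sInf {m | ∃ S : Finset V, S.card = m ∧ IsDeterminingSet G (S : Set V)}

/-- The Kneser graph `K_{n:k}`: vertices are the `k`-subsets of `[n]`,
edges join disjoint sets. -/
def kneserGraph (n k : ℕ) : SimpleGraph {s : Finset (Fin n) // s.card = k} where
  Adj a b := Disjoint (a : Finset (Fin n)) (b : Finset (Fin n)) ∧ a ≠ b
  symm := ⟨fun a b h => ⟨h.1.symm, h.2.symm⟩⟩
  loopless := ⟨fun a h => h.2 rfl⟩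

/-!
Every automorphism of `K(n, k)` with `n ≥ 2k + 1` is induced by a permutation of `[n]`.
Two distinct `k`-sets meet in `k - 1` points exactly when they have the largest possible number
`C(n - k - 1, k)` of common neighbours, so a Kneser automorphism is an automorphism of the
Johnson graph `J(n, k)`. An automorphism of `J(n, k)` maps the star of all `k`-sets through a
`(k - 1)`-set, a clique of size `n - k + 1 ≥ k + 2`, onto a clique of the same size, which is again
a star; this gives an automorphism of `J(n, k - 1)`, and induction on `k` produces the
permutation.

If two automorphisms, induced by `σ` and `τ`, agree on `S`, then `τ⁻¹σ` maps every member of `S`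
onto itself, hence preserves the subfamily of members containing each point; since these
subfamilies separate points, `σ = τ`.
-/

open Finset

lemma Nat.choose_lt_succ_choose {a j : ℕ} (h : j ≤ a) :
    a.choose (j + 1) < (a + 1).choose (j + 1) := by
  rw [Nat.choose_succ_succ']
  have := Nat.choose_pos h
  omega

lemma SimpleGraph.Iso.ncard_commonNeighbors {V W : Type*} {G : SimpleGraph V} {H : SimpleGraph W}
    (g : G ≃g H) (v w : V) :
    (H.commonNeighbors (g v) (g w)).ncard = (G.commonNeighbors v w).ncard := by
  rw [← Set.ncard_image_of_injective _ g.injective]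
  congr 1
  ext u
  obtain ⟨u, rfl⟩ := g.surjective u
  simp only [g.injective.mem_set_image, SimpleGraph.mem_commonNeighbors, g.map_adj_iff]

section Johnson

variable {α : Type*} {k : ℕ}

variable (k) in
def cardSupsets (T : Finset α) : Set {s : Finset α // #s = k} :=
  {A | T ⊆ A.1}

@[simp]
lemma mem_cardSupsets {T : Finset α} {A : {s : Finset α // #s = k}} :
    A ∈ cardSupsets k T ↔ T ⊆ A.1 :=
  Iff.rfl

lemma ncard_setOf_val_mem (𝒜 : Finset (Finset α)) (h𝒜 : ∀ s ∈ 𝒜, #s = k) :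
    {A : {s : Finset α // #s = k} | A.1 ∈ 𝒜}.ncard = #𝒜 := by
  rw [← Set.ncard_coe_finset, ← Set.ncard_image_of_injective _ Subtype.val_injective]
  congr 1
  ext s
  exact ⟨by rintro ⟨A, hA, rfl⟩; exact hA, fun hs => ⟨⟨s, h𝒜 s hs⟩, hs, rfl⟩⟩

lemma ncard_setOf_subset (U : Finset α) :
    {A : {s : Finset α // #s = k} | A.1 ⊆ U}.ncard = (#U).choose k := by
  rw [← card_powersetCard, ← ncard_setOf_val_mem _ fun s hs => (mem_powersetCard.1 hs).2]
  congr 1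
  ext A
  simp [A.2]

lemma eq_image_of_forall_subset {β : Type*} [DecidableEq β] {f : α → β}
    (hf : Function.Injective f) {A : Finset α} {B : Finset β} (hk : 0 < k) (hA : #A = k + 1)
    (hB : #B = k + 1)
    (h : ∀ T ⊆ A, #T = k → T.image f ⊆ B) : B = A.image f := by
  refine (eq_of_subset_of_card_le ?_ ?_).symm
  · intro y hy
    obtain ⟨x, hx, rfl⟩ := mem_image.1 hy
    obtain ⟨T, hxT, hTA, hT⟩ :=
      exists_subsuperset_card_eq (singleton_subset_iff.2 hx) (by simpa) (by omega)
    exact h T hTA hT (mem_image_of_mem f (singleton_subset_iff.1 hxT))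
  · rw [card_image_of_injective _ hf, hA, hB]

variable [DecidableEq α]

variable (α) in
def johnsonGraph (k : ℕ) : SimpleGraph {s : Finset α // #s = k} where
  Adj A B := #(A.1 ∩ B.1) + 1 = k
  symm := ⟨fun A B h => by rwa [inter_comm]⟩
  loopless := ⟨fun A h => by simp [A.2] at h⟩

@[simp]
lemma johnsonGraph_adj {A B : {s : Finset α // #s = k}} :
    (johnsonGraph α k).Adj A B ↔ #(A.1 ∩ B.1) + 1 = k :=
  Iff.rfl

lemma card_inter_lt_of_not_subset {X Y : Finset α} (h : ¬X ⊆ Y) : #(X ∩ Y) < #X :=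
  card_lt_card (inf_lt_left.2 h)

lemma card_inter_lt_of_ne {A B : {s : Finset α // #s = k}} (h : A ≠ B) : #(A.1 ∩ B.1) < k := by
  refine lt_of_lt_of_eq (card_inter_lt_of_not_subset fun hAB => h (Subtype.ext ?_)) A.2
  exact eq_of_subset_of_card_le hAB (by rw [A.2, B.2])

lemma ncard_cardSupsets [Fintype α] {T : Finset α} (hT : #T = k) :
    (cardSupsets (k + 1) T).ncard = Fintype.card α - k := by
  have := card_filter_powersetCard_subset T univ (k + 1) (subset_univ T) (by omega)
  rw [card_univ, hT, add_tsub_cancel_left, Nat.choose_one_right] at this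
  rw [← this, ← ncard_setOf_val_mem _ fun s hs => (mem_powersetCard.1 (mem_filter.1 hs).1).2]
  congr 1
  ext A
  simp [A.2]

lemma isClique_cardSupsets {T : Finset α} (hT : #T = k) :
    (johnsonGraph α (k + 1)).IsClique (cardSupsets (k + 1) T) := by
  intro A hA B hB hAB
  have := card_le_card (subset_inter hA hB)
  have := card_inter_lt_of_ne hAB
  simp only [johnsonGraph_adj]
  omega

lemma johnsonGraph_adj_iff_nonempty_inter_cardSupsets {T₁ T₂ : {s : Finset α // #s = k}} :
    (johnsonGraph α k).Adj T₁ T₂ ↔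
      T₁ ≠ T₂ ∧ (cardSupsets (k + 1) T₁.1 ∩ cardSupsets (k + 1) T₂.1).Nonempty := by
  have hunion := card_union_add_card_inter T₁.1 T₂.1
  rw [T₁.2, T₂.2] at hunion
  constructor
  · intro h
    exact ⟨(johnsonGraph α k).ne_of_adj h,
      ⟨⟨T₁.1 ∪ T₂.1, by simp only [johnsonGraph_adj] at h; omega⟩,
        subset_union_left, subset_union_right⟩⟩
  · rintro ⟨hne, A, hA₁, hA₂⟩
    have := card_le_card (union_subset hA₁ hA₂)
    have := card_inter_lt_of_ne hne
    simp only [johnsonGraph_adj]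
    omega

lemma subset_of_cardSupsets_subset [Fintype α] {T₁ T₂ : Finset α} (hT₁ : #T₁ = k)
    (hk : k + 1 < Fintype.card α) (h : cardSupsets (k + 1) T₁ ⊆ cardSupsets (k + 1) T₂) :
    T₂ ⊆ T₁ := by
  intro x hx
  by_contra hxT₁
  have hcard : #(insert x T₁) = k + 1 := by rw [card_insert_of_notMem hxT₁, hT₁]
  obtain ⟨y, hy⟩ : ∃ y, y ∉ insert x T₁ := by
    by_contra! hall
    have := card_le_card fun z (_ : z ∈ univ) => hall z
    rw [card_univ, hcard] at this
    omega
  rw [mem_insert, not_or] at hy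
  have hyT : #(insert y T₁) = k + 1 := by rw [card_insert_of_notMem hy.2, hT₁]
  have := h (show ⟨insert y T₁, hyT⟩ ∈ cardSupsets (k + 1) T₁ from subset_insert y T₁) hx
  rw [mem_insert] at this
  exact this.elim (fun h => hy.1 h.symm) hxT₁

lemma inter_subset_or_subset_union {A B C : Finset α} (hC : #C = k + 1) (hAB : #(A ∩ B) = k)
    (hCA : #(C ∩ A) = k) (hCB : #(C ∩ B) = k) : A ∩ B ⊆ C ∨ C ⊆ A ∪ B := by
  refine or_iff_not_imp_right.2 fun hCAB => ?_
  have hlt := card_inter_lt_of_not_subset hCAB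
  have hA : C ∩ A = C ∩ (A ∪ B) :=
    eq_of_subset_of_card_le (inter_subset_inter_left subset_union_left) (by omega)
  have hB : C ∩ B = C ∩ (A ∪ B) :=
    eq_of_subset_of_card_le (inter_subset_inter_left subset_union_right) (by omega)
  have hsub : C ∩ A ⊆ A ∩ B := fun x hx =>
    mem_inter.2 ⟨(mem_inter.1 hx).2, (mem_inter.1 (hB ▸ hA ▸ hx : x ∈ C ∩ B)).2⟩
  rw [← eq_of_subset_of_card_le hsub (by omega)]
  exact inter_subset_left

/-- A clique of `J(α, k + 1)` either lies in the star of a `k`-set or consists of subsets of a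
`(k + 2)`-set, and there are only `k + 2` of the latter. -/
lemma subset_cardSupsets_inter_of_isClique [Fintype α] {F : Set {s : Finset α // #s = k + 1}}
    (hF : (johnsonGraph α (k + 1)).IsClique F) (hcard : k + 3 ≤ F.ncard)
    {A B : {s : Finset α // #s = k + 1}} (hA : A ∈ F) (hB : B ∈ F) (hAB : A ≠ B) :
    F ⊆ cardSupsets (k + 1) (A.1 ∩ B.1) := by
  set T := A.1 ∩ B.1
  have hcardF : ∀ {X Y}, X ∈ F → Y ∈ F → X ≠ Y → #(X.1 ∩ Y.1) = k := fun hX hY hXY => by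
    have := hF hX hY hXY
    simp only [johnsonGraph_adj] at this
    omega
  have hT : #T = k := hcardF hA hB hAB
  have hdich : ∀ D ∈ F, T ⊆ D.1 ∨ D.1 ⊆ A.1 ∪ B.1 := by
    intro D hD
    by_cases hDA : D = A
    · exact .inr (hDA ▸ subset_union_left)
    by_cases hDB : D = B
    · exact .inr (hDB ▸ subset_union_right)
    exact inter_subset_or_subset_union D.2 hT (hcardF hD hA hDA) (hcardF hD hB hDB)
  intro C hC
  by_contra hTC
  have hCAB := (hdich C hC).resolve_left hTC
  have hall : F ⊆ {D | D.1 ⊆ A.1 ∪ B.1} := by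
    intro D hD
    by_contra hDAB
    have hTD := (hdich D hD).resolve_right hDAB
    have hDT : D.1 ∩ (A.1 ∪ B.1) = T := by
      have := card_inter_lt_of_not_subset hDAB
      rw [D.2] at this
      exact (eq_of_subset_of_card_le (subset_inter hTD inter_subset_union) (by omega)).symm
    have hDC : D.1 ∩ C.1 ⊆ T ∩ C.1 := by
      rw [← hDT, inter_assoc, inter_eq_right.2 hCAB]
    have := card_le_card hDC
    have := card_inter_lt_of_not_subset hTC
    have := hcardF hD hC fun h => hTC (h ▸ hTD)
    omega
  have hle := Set.ncard_le_ncard hall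
  have hunion : #(A.1 ∪ B.1) + #T = #A.1 + #B.1 := card_union_add_card_inter A.1 B.1
  have := A.2
  have := B.2
  rw [ncard_setOf_subset, show #(A.1 ∪ B.1) = k + 1 + 1 by omega, Nat.choose_succ_self_right] at hle
  omega

lemma exists_image_cardSupsets_eq [Fintype α]
    (φ : johnsonGraph α (k + 1) ≃g johnsonGraph α (k + 1)) (hn : 2 * k + 3 ≤ Fintype.card α)
    {T : Finset α} (hT : #T = k) :
    ∃ T' : {s : Finset α // #s = k}, φ '' cardSupsets (k + 1) T = cardSupsets (k + 1) T'.1 := by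
  have hclique : (johnsonGraph α (k + 1)).IsClique (φ '' cardSupsets (k + 1) T) := by
    rintro _ ⟨A, hA, rfl⟩ _ ⟨B, hB, rfl⟩ hne
    exact φ.map_adj_iff.2 (isClique_cardSupsets hT hA hB fun h => hne (h ▸ rfl))
  have hcard : (φ '' cardSupsets (k + 1) T).ncard = Fintype.card α - k := by
    rw [Set.ncard_image_of_injective _ φ.injective, ncard_cardSupsets hT]
  obtain ⟨X, Y, hX, hY, hXY⟩ := (Set.one_lt_ncard_iff (Set.toFinite _)).1
    (by omega : 1 < (φ '' cardSupsets (k + 1) T).ncard)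
  have hXYcard : #(X.1 ∩ Y.1) = k := by
    have := hclique hX hY hXY
    simp only [johnsonGraph_adj] at this
    omega
  refine ⟨⟨X.1 ∩ Y.1, hXYcard⟩, Set.eq_of_subset_of_ncard_le ?_ ?_⟩
  · exact subset_cardSupsets_inter_of_isClique hclique (by omega) hX hY hXY
  · rw [ncard_cardSupsets hXYcard, hcard]

lemma exists_iso_image_cardSupsets_eq [Fintype α]
    (φ : johnsonGraph α (k + 1) ≃g johnsonGraph α (k + 1)) (hn : 2 * k + 3 ≤ Fintype.card α) :
    ∃ ψ : johnsonGraph α k ≃g johnsonGraph α k,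
      ∀ T, φ '' cardSupsets (k + 1) T.1 = cardSupsets (k + 1) (ψ T).1 := by
  choose ψ hψ using fun T : {s : Finset α // #s = k} => exists_image_cardSupsets_eq φ hn T.2
  have hinj : Function.Injective ψ := by
    intro T₁ T₂ h
    have hstar : cardSupsets (k + 1) T₁.1 = cardSupsets (k + 1) T₂.1 :=
      Set.image_injective.2 φ.injective (by rw [hψ, hψ, h])
    exact Subtype.ext ((subset_of_cardSupsets_subset T₂.2 (by omega) hstar.ge).antisymm
      (subset_of_cardSupsets_subset T₁.2 (by omega) hstar.le))
  refine ⟨{ Equiv.ofBijective ψ (Finite.injective_iff_bijective.1 hinj) with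
    map_rel_iff' := fun {T₁ T₂} => ?_ }, hψ⟩
  simp only [Equiv.ofBijective_apply]
  rw [johnsonGraph_adj_iff_nonempty_inter_cardSupsets,
    johnsonGraph_adj_iff_nonempty_inter_cardSupsets, ← hψ, ← hψ,
    ← Set.image_inter φ.injective, Set.image_nonempty, hinj.ne_iff]

theorem exists_perm_of_johnsonGraph_iso [Fintype α] :
    ∀ {k : ℕ}, 2 * k + 1 ≤ Fintype.card α → ∀ φ : johnsonGraph α k ≃g johnsonGraph α k,
      ∃ σ : Equiv.Perm α, ∀ A, (φ A).1 = A.1.image σ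
  | 0, _, φ => ⟨1, fun A => by rw [card_eq_zero.1 (φ A).2, card_eq_zero.1 A.2, image_empty]⟩
  | 1, _, φ => by
    let e : α ≃ {s : Finset α // #s = 1} := Equiv.ofBijective (fun a => ⟨{a}, card_singleton a⟩)
      ⟨fun a b h => singleton_injective (congrArg Subtype.val h),
        fun A => (card_eq_one.1 A.2).imp fun a ha => Subtype.ext ha.symm⟩
    have he : ∀ a, (e a).1 = {a} := fun _ => rfl
    refine ⟨e.trans (φ.toEquiv.trans e.symm), fun A => ?_⟩
    obtain ⟨a, rfl⟩ := e.surjective A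
    rw [he, image_singleton, ← he, Equiv.trans_apply, Equiv.trans_apply, Equiv.apply_symm_apply]
    rfl
  | k + 2, hn, φ => by
    obtain ⟨ψ, hψ⟩ := exists_iso_image_cardSupsets_eq φ (by omega)
    obtain ⟨σ, hσ⟩ := exists_perm_of_johnsonGraph_iso (by omega) ψ
    refine ⟨σ, fun A => eq_image_of_forall_subset σ.injective k.succ_pos A.2 (φ A).2 ?_⟩
    intro T hTA hT
    rw [← hσ ⟨T, hT⟩, ← mem_cardSupsets, ← hψ ⟨T, hT⟩]
    exact Set.mem_image_of_mem φ hTA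

end Johnson

section Kneser

variable {n k : ℕ}

lemma kneserGraph_adj_iff (hk : 0 < k) {A B : {s : Finset (Fin n) // #s = k}} :
    (kneserGraph n k).Adj A B ↔ Disjoint A.1 B.1 := by
  refine ⟨And.left, fun h => ⟨h, ?_⟩⟩
  rintro rfl
  have := A.2
  rw [disjoint_self.1 h, bot_eq_empty, card_empty] at this
  omega

lemma kneserGraph_commonNeighbors (hk : 0 < k) (A B : {s : Finset (Fin n) // #s = k}) :
    (kneserGraph n k).commonNeighbors A B = {C | C.1 ⊆ (A.1 ∪ B.1)ᶜ} := by
  ext C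
  simp only [SimpleGraph.mem_commonNeighbors, kneserGraph_adj_iff hk, Set.mem_ofPred_eq,
    subset_compl_iff_disjoint_left, disjoint_union_left]

lemma ncard_commonNeighbors_kneserGraph (hk : 0 < k) (A B : {s : Finset (Fin n) // #s = k}) :
    ((kneserGraph n k).commonNeighbors A B).ncard = (n - #(A.1 ∪ B.1)).choose k := by
  rw [kneserGraph_commonNeighbors hk, ncard_setOf_subset, card_compl, Fintype.card_fin]

/-- `C(n - |A ∪ B|, k)` is strictly decreasing in `|A ∪ B|` as long as `n ≥ 2k + 1`. -/
lemma johnsonGraph_adj_iff_ncard_commonNeighbors (hn : 2 * k + 1 ≤ n)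
    {A B : {s : Finset (Fin n) // #s = k}} (hAB : A ≠ B) :
    (johnsonGraph (Fin n) k).Adj A B ↔
      ((kneserGraph n k).commonNeighbors A B).ncard = (n - (k + 1)).choose k := by
  obtain _ | j := k
  · exact absurd (Subtype.ext (by rw [card_eq_zero.1 A.2, card_eq_zero.1 B.2])) hAB
  rw [johnsonGraph_adj, ncard_commonNeighbors_kneserGraph j.succ_pos]
  have hunion := card_union_add_card_inter A.1 B.1
  have hlt := card_inter_lt_of_ne hAB
  have := A.2
  have := B.2
  refine ⟨fun h => by rw [show #(A.1 ∪ B.1) = j + 1 + 1 by omega], fun h => ?_⟩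
  by_contra hne
  have : (n - #(A.1 ∪ B.1)).choose (j + 1) < (n - (j + 1 + 1)).choose (j + 1) := calc
    _ ≤ (n - (j + 3)).choose (j + 1) := Nat.choose_le_choose _ (by omega)
    _ < (n - (j + 3) + 1).choose (j + 1) := Nat.choose_lt_succ_choose (by omega)
    _ = _ := by congr 1; omega
  exact this.ne h

lemma johnsonGraph_adj_apply_iff (hn : 2 * k + 1 ≤ n) (g : kneserGraph n k ≃g kneserGraph n k)
    {A B : {s : Finset (Fin n) // #s = k}} :
    (johnsonGraph (Fin n) k).Adj (g A) (g B) ↔ (johnsonGraph (Fin n) k).Adj A B := by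
  by_cases hAB : A = B
  · subst hAB
    simp only [SimpleGraph.irrefl]
  rw [johnsonGraph_adj_iff_ncard_commonNeighbors hn hAB,
    johnsonGraph_adj_iff_ncard_commonNeighbors hn (g.injective.ne hAB), g.ncard_commonNeighbors]

theorem exists_perm_of_kneserGraph_iso (hn : 2 * k + 1 ≤ n)
    (g : kneserGraph n k ≃g kneserGraph n k) :
    ∃ σ : Equiv.Perm (Fin n), ∀ A, (g A).1 = A.1.image σ :=
  exists_perm_of_johnsonGraph_iso (by simpa using hn)
    ⟨g.toEquiv, johnsonGraph_adj_apply_iff hn g⟩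

end Kneser

lemma perm_eq_of_forall_image_eq {α : Type*} [DecidableEq α] {k : ℕ}
    {S : Set {s : Finset α // #s = k}}
    (hS : ∀ a b : α, a ≠ b → {V | V ∈ S ∧ a ∈ V.1} ≠ {V | V ∈ S ∧ b ∈ V.1})
    {σ τ : Equiv.Perm α} (h : ∀ V ∈ S, V.1.image σ = V.1.image τ) : σ = τ := by
  ext a
  by_contra hne
  refine hS a (τ.symm (σ a)) (fun h' => hne (τ.symm_apply_eq.1 h'.symm))
    (Set.ext fun V => and_congr_right fun hV => ?_)
  calc a ∈ V.1 ↔ σ a ∈ V.1.image σ := σ.injective.mem_finset_image.symm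
    _ ↔ τ (τ.symm (σ a)) ∈ V.1.image τ := by rw [h V hV, τ.apply_symm_apply]
    _ ↔ τ.symm (σ a) ∈ V.1 := τ.injective.mem_finset_image

theorem stmt_4_general (n k : ℕ) (hn : 2 * k + 1 ≤ n)
    (S : Set {s : Finset (Fin n) // s.card = k})
    (h1 : ∀ a b : Fin n, a ≠ b →
      {V | V ∈ S ∧ a ∈ V.1} ≠ {V | V ∈ S ∧ b ∈ V.1}) :
    IsDeterminingSet (kneserGraph n k) S := by
  intro g h hgh
  obtain ⟨σ, hσ⟩ := exists_perm_of_kneserGraph_iso hn g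
  obtain ⟨τ, hτ⟩ := exists_perm_of_kneserGraph_iso hn h
  have hστ : σ = τ := perm_eq_of_forall_image_eq h1 fun V hV => by
    rw [← hσ, ← hτ, hgh V hV]
  exact RelIso.ext fun V => Subtype.ext (by rw [hσ, hτ, hστ])

theorem stmt_4 (n k : ℕ) (hn : 2 * k + 1 ≤ n)
    (S : Set {s : Finset (Fin n) // s.card = k})
    (h1 : ∀ a b : Fin n, a ≠ b →
      {V | V ∈ S ∧ a ∈ V.1} ≠ {V | V ∈ S ∧ b ∈ V.1})
    (h2 : {i : Fin n | ∀ V ∈ S, i ∉ V.1}.Subsingleton) :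
    IsDeterminingSet (kneserGraph n k) S :=
  stmt_4_general n k hn S h1
end

section
/- Let H be a simple k-regular hypergraph with d vertices and m edges. If m > d + C(d,2), then k·d ≥ 3m − 2d − C(d,2), where C(d,2) denotes the binomial coefficient. -/
/-!
Each edge of size `s` contributes `s` to the degree sum `k * d`. Edges of size at least `3`
contribute at least `3`; the deficit `3 - s` is `2` for singletons and `1` for pairs, and a simple
hypergraph has at most `d` singleton edges and at most `C(d, 2)` edges of size `2`.
-/

open Finset

/-- A simple `k`-regular hypergraph on vertex set `Fin d`: a finite family of
distinct nonempty edges such that every vertex lies in exactly `k` edges. -/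
def IsRegularHypergraph (d k : ℕ) (E : Finset (Finset (Fin d))) : Prop :=
  (∀ e ∈ E, e.Nonempty) ∧ ∀ v : Fin d, (E.filter (fun e => v ∈ e)).card = k

theorem IsRegularHypergraph.sum_card_eq {d k : ℕ} {E : Finset (Finset (Fin d))}
    (hE : IsRegularHypergraph d k E) : ∑ e ∈ E, #e = k * d := by
  rw [sum_card hE.2, Fintype.card_fin, mul_comm]

theorem card_filter_card_eq_le_choose {α : Type*} [Fintype α] (E : Finset (Finset α)) (r : ℕ) :
    #{e ∈ E | #e = r} ≤ (Fintype.card α).choose r := by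
  rw [← card_univ, ← card_powersetCard]
  exact card_le_card fun e he ↦ mem_powersetCard.2 ⟨subset_univ e, (mem_filter.1 he).2⟩

theorem three_le_card_add_deficit {α : Type*} {e : Finset α} (he : e.Nonempty) :
    3 ≤ #e + ((if #e = 1 then 2 else 0) + if #e = 2 then 1 else 0) := by
  have := he.card_pos
  split_ifs <;> omega

theorem three_mul_card_le_sum_card_add {α : Type*} (E : Finset (Finset α))
    (hE : ∀ e ∈ E, e.Nonempty) :
    3 * #E ≤ ∑ e ∈ E, #e + (2 * #{e ∈ E | #e = 1} + #{e ∈ E | #e = 2}) := by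
  calc 3 * #E = ∑ _e ∈ E, 3 := by rw [sum_const, smul_eq_mul, mul_comm]
    _ ≤ ∑ e ∈ E, (#e + ((if #e = 1 then 2 else 0) + if #e = 2 then 1 else 0)) :=
      sum_le_sum fun e he ↦ three_le_card_add_deficit (hE e he)
    _ = ∑ e ∈ E, #e + (2 * #{e ∈ E | #e = 1} + #{e ∈ E | #e = 2}) := by
      simp only [sum_add_distrib, ← sum_filter, sum_const, smul_eq_mul, one_mul, mul_comm]

theorem stmt_6_general (d k : ℕ) (E : Finset (Finset (Fin d)))
    (hE : IsRegularHypergraph d k E) :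
    k * d + 2 * d + d.choose 2 ≥ 3 * E.card := by
  have singletons : #{e ∈ E | #e = 1} ≤ d := by
    simpa using card_filter_card_eq_le_choose E 1
  have pairs : #{e ∈ E | #e = 2} ≤ d.choose 2 := by
    simpa using card_filter_card_eq_le_choose E 2
  have counting := three_mul_card_le_sum_card_add E hE.1
  rw [hE.sum_card_eq] at counting
  omega

theorem stmt_6 (d k : ℕ) (E : Finset (Finset (Fin d)))
    (hE : IsRegularHypergraph d k E)
    (hm : E.card > d + d.choose 2) :
    k * d + 2 * d + d.choose 2 ≥ 3 * E.card :=
  stmt_6_general d k E hE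
end

section
/- For every odd d ≥ 3 and every odd k with 1 ≤ k ≤ d, there exists a simple k-regular hypergraph with d vertices and exactly d(k+1)/2 edges. -/
/-!
Write `k = 2m + 1`. The circulant graph on `ℤ/d` with jumps `±1, …, ±m` is `2m`-regular,
because `2m < d` makes these `2m` jumps distinct and nonzero. Its edges, read as `2`-sets,
together with a loop `{v}` at every vertex form a simple `(2m + 1)`-regular hypergraph; by the
handshake lemma it has `d + dm = d(k + 1)/2` edges.
-/

open Finset Pointwise Fin.NatCast

theorem Sym2.toFinset_injective {α : Type*} [DecidableEq α] :
    Function.Injective (Sym2.toFinset : Sym2 α → Finset α) := fun _ _ h =>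
  Sym2.ext fun x => by rw [← Sym2.mem_toFinset, h, Sym2.mem_toFinset]

namespace Fin

variable {d m : ℕ} [NeZero d]

theorem zero_notMem_image_natCast_Icc (h : m < d) :
    (0 : Fin d) ∉ (Icc 1 m).image (Nat.cast : ℕ → Fin d) := by
  simp only [mem_image, mem_Icc, natCast_eq_zero, not_exists, not_and]
  intro i hi hdi
  exact absurd (Nat.le_of_dvd (by omega) hdi) (by omega)

theorem card_image_natCast_Icc (h : m < d) :
    #((Icc 1 m).image (Nat.cast : ℕ → Fin d)) = m := by
  rw [card_image_of_injOn, Nat.card_Icc, Nat.add_sub_cancel]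
  intro i hi j hj hij
  simp only [coe_Icc, Set.mem_Icc] at hi hj
  rw [← val_cast_of_lt (n := d) (a := i) (by omega),
    ← val_cast_of_lt (n := d) (a := j) (by omega), hij]

theorem disjoint_image_natCast_Icc_neg (h : 2 * m < d) :
    Disjoint ((Icc 1 m).image (Nat.cast : ℕ → Fin d)) (-(Icc 1 m).image Nat.cast) := by
  rw [Finset.disjoint_left]
  intro x hx hnx
  rw [mem_neg'] at hnx
  obtain ⟨i, hi, rfl⟩ := mem_image.mp hx
  obtain ⟨j, hj, hji⟩ := mem_image.mp hnx
  rw [mem_Icc] at hi hj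
  have hd : d ∣ j + i := by
    rw [← natCast_eq_zero, Nat.cast_add, hji, neg_add_cancel]
  exact absurd (Nat.le_of_dvd (by omega) hd) (by omega)

end Fin

namespace SimpleGraph

section EdgesWithLoops

theorem IsRegularOfDegree.two_mul_card_edgeFinset {V : Type*} [Fintype V] {G : SimpleGraph V}
    [DecidableRel G.Adj] {r : ℕ} (hG : G.IsRegularOfDegree r) :
    2 * #G.edgeFinset = Fintype.card V * r := by
  rw [← sum_degrees_eq_twice_card_edges, Finset.sum_congr rfl fun v _ => hG v, sum_const,
    smul_eq_mul, card_univ]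

variable {V : Type*} [Fintype V] [DecidableEq V] (G : SimpleGraph V) [DecidableRel G.Adj]

def edgesWithLoops : Finset (Finset V) :=
  univ.image singleton ∪ G.edgeFinset.image Sym2.toFinset

theorem disjoint_image_singleton_image_toFinset :
    Disjoint (univ.image singleton) (G.edgeFinset.image Sym2.toFinset) := by
  rw [Finset.disjoint_left]
  rintro _ hv he
  obtain ⟨v, -, rfl⟩ := mem_image.mp hv
  obtain ⟨e, he, hev⟩ := mem_image.mp he
  have h2 := e.card_toFinset_of_not_isDiag (G.not_isDiag_of_mem_edgeSet (mem_edgeFinset.mp he))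
  rw [hev, card_singleton] at h2
  omega

theorem nonempty_of_mem_edgesWithLoops {e : Finset V} (he : e ∈ G.edgesWithLoops) :
    e.Nonempty := by
  rcases mem_union.mp he with he | he <;> obtain ⟨x, -, rfl⟩ := mem_image.mp he
  · exact singleton_nonempty x
  · exact nonempty_iff_ne_empty.mpr (Sym2.toFinset_ne_empty x)

theorem card_edgesWithLoops : #G.edgesWithLoops = Fintype.card V + #G.edgeFinset := by
  rw [edgesWithLoops, card_union_of_disjoint G.disjoint_image_singleton_image_toFinset,
    card_image_of_injective _ singleton_injective,
    card_image_of_injective _ Sym2.toFinset_injective, card_univ]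

theorem card_filter_mem_edgesWithLoops (v : V) :
    #(G.edgesWithLoops.filter (v ∈ ·)) = G.degree v + 1 := by
  have loops : (univ.image singleton : Finset (Finset V)).filter (v ∈ ·) = {{v}} := by
    ext e
    simp only [mem_filter, mem_image, mem_univ, true_and, mem_singleton]
    constructor
    · rintro ⟨⟨w, rfl⟩, hv⟩
      rw [mem_singleton.mp hv]
    · rintro rfl
      exact ⟨⟨v, rfl⟩, mem_singleton_self v⟩
  have edges : (G.edgeFinset.image Sym2.toFinset).filter (v ∈ ·) =
      (G.incidenceFinset v).image Sym2.toFinset := by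
    rw [filter_image, incidenceFinset_eq_filter]
    simp only [Sym2.mem_toFinset]
  rw [edgesWithLoops, filter_union, card_union_of_disjoint
    (disjoint_filter_filter G.disjoint_image_singleton_image_toFinset), loops, edges,
    card_image_of_injective _ Sym2.toFinset_injective, card_incidenceFinset_eq_degree,
    card_singleton, add_comm]

theorem IsRegularOfDegree.isRegularHypergraph_edgesWithLoops {d r : ℕ} {G : SimpleGraph (Fin d)}
    [DecidableRel G.Adj] (hG : G.IsRegularOfDegree r) :
    IsRegularHypergraph d (r + 1) G.edgesWithLoops :=
  ⟨fun _ => G.nonempty_of_mem_edgesWithLoops, fun v => by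
    rw [card_filter_mem_edgesWithLoops, hG v]⟩

end EdgesWithLoops

section Circulant

variable {A : Type*} [AddGroup A] [Fintype A] [DecidableEq A]

theorem neighborFinset_circulantGraph {s : Finset A} (hs : 0 ∉ s) (v : A) :
    (circulantGraph (s : Set A)).neighborFinset v = (s ∪ -s).image (· + v) := by
  ext w
  obtain ⟨t, rfl⟩ : ∃ t, w = t + v := ⟨w - v, (sub_add_cancel w v).symm⟩
  simp only [mem_neighborFinset, circulantGraph_adj, mem_image, mem_union, mem_neg',
    add_left_inj, exists_eq_right, sub_add_cancel_right, add_sub_cancel_right, right_eq_add,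
    mem_coe]
  constructor
  · exact fun h => h.2.symm
  · rintro h
    refine ⟨?_, h.symm⟩
    rintro rfl
    simp only [neg_zero, or_self] at h
    exact hs h

theorem circulantGraph_isRegularOfDegree {s : Finset A} (hs : 0 ∉ s) :
    (circulantGraph (s : Set A)).IsRegularOfDegree #(s ∪ -s) := fun v => by
  rw [← card_neighborFinset_eq_degree, neighborFinset_circulantGraph hs,
    card_image_of_injective _ (add_left_injective v)]

variable {d m : ℕ} [NeZero d]

theorem circulantGraph_natCast_Icc_isRegularOfDegree (h : 2 * m < d) :
    (circulantGraph ((Icc 1 m).image (Nat.cast : ℕ → Fin d) : Set (Fin d))).IsRegularOfDegree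
      (2 * m) := by
  have hreg := circulantGraph_isRegularOfDegree
    (Fin.zero_notMem_image_natCast_Icc (d := d) (m := m) (by omega))
  rwa [card_union_of_disjoint (Fin.disjoint_image_natCast_Icc_neg h), card_neg,
    Fin.card_image_natCast_Icc (by omega), ← two_mul] at hreg

end Circulant

end SimpleGraph

theorem stmt_11_general (d k : ℕ) (hkodd : Odd k) (hkd : k ≤ d) :
    ∃ E : Finset (Finset (Fin d)),
      IsRegularHypergraph d k E ∧ E.card = d * (k + 1) / 2 := by
  obtain ⟨m, rfl⟩ := hkodd
  have : NeZero d := ⟨by omega⟩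
  have hG := SimpleGraph.circulantGraph_natCast_Icc_isRegularOfDegree (d := d) (m := m) (by omega)
  refine ⟨_, hG.isRegularHypergraph_edgesWithLoops, ?_⟩
  have hcard := hG.two_mul_card_edgeFinset
  rw [Fintype.card_fin] at hcard
  rw [SimpleGraph.card_edgesWithLoops, Fintype.card_fin,
    show d * (2 * m + 1 + 1) = 2 * (d + d * m) by ring, Nat.mul_div_cancel_left _ two_pos]
  linarith

theorem stmt_11 (d k : ℕ) (hd3 : 3 ≤ d) (hdodd : Odd d)
    (hk1 : 1 ≤ k) (hkodd : Odd k) (hkd : k ≤ d) :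
    ∃ E : Finset (Finset (Fin d)),
      IsRegularHypergraph d k E ∧ E.card = d * (k + 1) / 2 :=
  stmt_11_general d k hkodd hkd
end

section
/- Let k and d be positive integers with 3 ≤ k+1 ≤ d, and let n be a natural number with ⌊(d−1)(k+1)/2⌋ < n < ⌊d(k+1)/2⌋. Then the determining number of the Kneser graph K_{n+1:k} equals d. -/
/-!
For `N ≥ 3k - 1` the number `C(N - |A ∪ B|, k)` of common neighbours of two vertices of the
Kneser graph `K(N, k)` determines `|A ∩ B|`, so an automorphism preserves the Johnson adjacency
`|A ∩ B| = k - 1`. Large Johnson cliques are stars of `(k-1)`-sets, which gives the usual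
induction showing that such a map is induced by a permutation of the ground set. Hence a set `S`
of vertices is determining iff it separates points, i.e. the columns `x ↦ {A ∈ S | x ∈ A}` are
distinct. Distinct columns of total size `|S| k`, at most one of them empty and at most `|S|`
singletons, force `2N ≤ |S| (k + 1) + 2`, so `|S| ≥ d`. Conversely, `d` vertices suffice: take
as columns the singletons of `u = 2N - dk` points of `ZMod d` together with the edges of a
circulant graph, corrected by a matching, in which these `u` points have degree `k - 1` and all
others degree `k`.
-/

open Finset

lemma Finset.exists_eq_of_injOn {α : Type*} [Fintype α] {k : ℕ} {g : Finset α → Finset α}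
    (hmaps : ∀ A : Finset α, A.card = k → (g A).card = k)
    (hinj : {A : Finset α | A.card = k}.InjOn g) {B : Finset α} (hB : B.card = k) :
    ∃ A, A.card = k ∧ g A = B := by
  obtain ⟨A, hA, hAB⟩ := surj_on_of_inj_on_of_card_le (s := univ.powersetCard k)
    (t := univ.powersetCard k) (fun A _ => g A)
    (fun A hA => mem_powersetCard_univ.2 (hmaps A (mem_powersetCard_univ.1 hA)))
    (fun A₁ A₂ h₁ h₂ h => hinj (mem_powersetCard_univ.1 h₁) (mem_powersetCard_univ.1 h₂) h)
    le_rfl B (mem_powersetCard_univ.2 hB)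
  exact ⟨A, mem_powersetCard_univ.1 hA, hAB.symm⟩

section Johnson
variable {α : Type*} [DecidableEq α]

lemma subset_union_of_not_subset_inter {k : ℕ} {A B C : Finset α} (hC : C.card = k)
    (hCA : (C ∩ A).card + 1 = k) (hCB : (C ∩ B).card + 1 = k) (hAB : (A ∩ B).card + 1 = k)
    (hABC : ¬A ∩ B ⊆ C) : C ⊆ A ∪ B := by
  have hlt : (C ∩ (A ∩ B)).card < (A ∩ B).card :=
    card_lt_card ⟨inter_subset_right, fun h => hABC fun x hx => (mem_inter.1 (h hx)).1⟩
  have key := card_union_add_card_inter (C ∩ A) (C ∩ B)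
  rw [← inter_union_distrib_left, ← inter_inter_distrib_left] at key
  exact inter_eq_left.1 (eq_of_subset_of_card_le inter_subset_left (by omega))

lemma card_inter_lt_of_ne_s13 {A B : Finset α} (hAB : A.card = B.card) (hne : A ≠ B) :
    (A ∩ B).card < A.card :=
  card_lt_card ⟨inter_subset_left, fun h =>
    hne (eq_of_subset_of_card_le (fun _ hx => (mem_inter.1 (h hx)).2) hAB.ge)⟩

lemma card_inter_add_one_eq_of_ne {k : ℕ} {A B K : Finset α} (hA : A.card = k + 1)
    (hB : B.card = k + 1) (hAB : A ≠ B) (hK : K.card = k) (hKA : K ⊆ A) (hKB : K ⊆ B) :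
    (A ∩ B).card + 1 = k + 1 := by
  have := card_inter_lt_of_ne_s13 (hA.trans hB.symm) hAB
  have := card_le_card (subset_inter hKA hKB)
  omega

lemma card_inter_add_one_iff_exists {k : ℕ} {K₁ K₂ : Finset α} (h₁ : K₁.card = k)
    (h₂ : K₂.card = k) (hne : K₁ ≠ K₂) :
    (K₁ ∩ K₂).card + 1 = k ↔ ∃ A : Finset α, A.card = k + 1 ∧ K₁ ⊆ A ∧ K₂ ⊆ A := by
  have hu := card_union_add_card_inter K₁ K₂
  have hlt := card_inter_lt_of_ne_s13 (h₁.trans h₂.symm) hne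
  refine ⟨fun h => ⟨K₁ ∪ K₂, by omega, subset_union_left, subset_union_right⟩, ?_⟩
  rintro ⟨A, hA, hK₁A, hK₂A⟩
  have := card_le_card (union_subset hK₁A hK₂A)
  omega

lemma image_subset_of_forall_erase {β : Type*} [DecidableEq β] {f : α → β} {A : Finset α}
    {B : Finset β} (hA : 1 < A.card) (h : ∀ x ∈ A, (A.erase x).image f ⊆ B) :
    A.image f ⊆ B := by
  obtain ⟨a, ha, b, hb, hab⟩ := one_lt_card.1 hA
  intro y hy
  obtain ⟨z, hz, rfl⟩ := mem_image.1 hy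
  by_cases hza : z = a
  · exact h b hb (mem_image_of_mem f (mem_erase.2 ⟨hza ▸ hab, hz⟩))
  · exact h a ha (mem_image_of_mem f (mem_erase.2 ⟨hza, hz⟩))

lemma subset_union_of_clique {k : ℕ} {F : Finset (Finset α)} (hcard : ∀ A ∈ F, A.card = k)
    (hF : ∀ A ∈ F, ∀ B ∈ F, A ≠ B → (A ∩ B).card + 1 = k) {A B C : Finset α} (hA : A ∈ F)
    (hB : B ∈ F) (hC : C ∈ F) (hAB : A ≠ B) (hABC : ¬A ∩ B ⊆ C) {D : Finset α} (hD : D ∈ F) :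
    D ⊆ A ∪ B := by
  have hCA : C ≠ A := by rintro rfl; exact hABC inter_subset_left
  have hCB : C ≠ B := by rintro rfl; exact hABC inter_subset_right
  have hCU : C ⊆ A ∪ B := subset_union_of_not_subset_inter (hcard C hC)
    (hF C hC A hA hCA) (hF C hC B hB hCB) (hF A hA B hB hAB) hABC
  by_contra hDU
  have hDA : D ≠ A := by rintro rfl; exact hDU subset_union_left
  have hDB : D ≠ B := by rintro rfl; exact hDU subset_union_right
  have hDC : D ≠ C := by rintro rfl; exact hDU hCU
  have h1 : A ∩ B ⊆ D := by
    by_contra h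
    exact hDU (subset_union_of_not_subset_inter (hcard D hD) (hF D hD A hA hDA)
      (hF D hD B hB hDB) (hF A hA B hB hAB) h)
  have h2 : A ∩ C ⊆ D := by
    by_contra h
    exact hDU ((subset_union_of_not_subset_inter (hcard D hD) (hF D hD A hA hDA)
      (hF D hD C hC hDC) (hF A hA C hC hCA.symm) h).trans (union_subset subset_union_left hCU))
  -- `D` would contain the two distinct `(k-1)`-subsets `A ∩ B` and `A ∩ C` of `A`, hence `A`.
  have h3 : ¬A ∩ C ⊆ A ∩ B := fun h => hABC <| by
    have := hF A hA C hC hCA.symm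
    have := hF A hA B hB hAB
    rw [← eq_of_subset_of_card_le h (by omega)]
    exact inter_subset_right
  have hlt : (A ∩ B).card < (A ∩ B ∪ A ∩ C).card :=
    card_lt_card ⟨subset_union_left, fun h => h3 (subset_union_right.trans h)⟩
  have hle := card_le_card (union_subset (subset_inter h1 inter_subset_left)
    (subset_inter h2 inter_subset_left) : A ∩ B ∪ A ∩ C ⊆ D ∩ A)
  have := hF D hD A hA hDA
  have := hF A hA B hB hAB
  omega

-- The maximal Johnson cliques without a common `(k-1)`-subset are the `k`-subsets of a
-- `(k+1)`-set, which have only `k + 1` members.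
lemma exists_subset_of_clique {k : ℕ} (F : Finset (Finset α)) (hcard : ∀ A ∈ F, A.card = k)
    (hF : ∀ A ∈ F, ∀ B ∈ F, A ≠ B → (A ∩ B).card + 1 = k) (hsize : k + 2 ≤ F.card) :
    ∃ K : Finset α, K.card + 1 = k ∧ ∀ C ∈ F, K ⊆ C := by
  obtain ⟨A, hA, B, hB, hAB⟩ := one_lt_card.1 (by omega : 1 < F.card)
  refine ⟨A ∩ B, hF A hA B hB hAB, ?_⟩
  by_contra! ⟨C, hC, hABC⟩
  have hU : (A ∪ B).card = k + 1 := by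
    have := card_union_add_card_inter A B
    have := hF A hA B hB hAB
    rw [hcard A hA, hcard B hB] at *
    omega
  have := card_le_card (show F ⊆ (A ∪ B).powersetCard k from fun D hD =>
    mem_powersetCard.2 ⟨subset_union_of_clique hcard hF hA hB hC hAB hABC hD, hcard D hD⟩)
  rw [card_powersetCard, hU, Nat.choose_succ_self_right] at this
  omega

variable [Fintype α]

def supersets (k : ℕ) (K : Finset α) : Finset (Finset α) := (univ.powersetCard k).filter (K ⊆ ·)

lemma mem_supersets {k : ℕ} {K A : Finset α} : A ∈ supersets k K ↔ A.card = k ∧ K ⊆ A := by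
  simp [supersets, mem_powersetCard]

lemma card_supersets (K : Finset α) :
    (supersets (K.card + 1) K).card = Fintype.card α - K.card := by
  have : supersets (K.card + 1) K = Kᶜ.image (insert · K) := by
    ext A
    rw [mem_supersets, mem_image]
    simp only [mem_compl]
    rw [exists_eq_insert_iff, and_comm, eq_comm]
  rw [this, card_image_of_injOn fun a ha b _ h => (insert_inj (mem_compl.1 ha)).1 h,
    card_compl]

lemma eq_of_forall_subset_iff {k : ℕ} {K₁ K₂ : Finset α} (h₁ : K₁.card = k)
    (h₂ : K₂.card = k) (hα : k + 2 ≤ Fintype.card α)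
    (h : ∀ A : Finset α, A.card = k + 1 → (K₁ ⊆ A ↔ K₂ ⊆ A)) : K₁ = K₂ := by
  by_contra hne
  obtain ⟨z, hz₂, hz₁⟩ := not_subset.1 fun h' : K₂ ⊆ K₁ =>
    hne (eq_of_subset_of_card_le h' (by omega)).symm
  obtain ⟨x, -, hx⟩ := exists_mem_notMem_of_card_lt_card
    (show (insert z K₁).card < (univ : Finset α).card by
      have := card_insert_le z K₁; rw [card_univ]; omega)
  rw [mem_insert, not_or] at hx
  have hA : (insert x K₁).card = k + 1 := by rw [card_insert_of_notMem hx.2, h₁]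
  rcases mem_insert.1 ((h _ hA).1 (subset_insert x K₁) hz₂) with rfl | hz
  · exact hx.1 rfl
  · exact hz₁ hz

variable {k : ℕ} {g : Finset α → Finset α}

lemma exists_image_supersets_eq (hα : 2 * k + 3 ≤ Fintype.card α)
    (hmaps : ∀ A : Finset α, A.card = k + 1 → (g A).card = k + 1)
    (hinj : {A : Finset α | A.card = k + 1}.InjOn g)
    (hrel : ∀ A B : Finset α, A.card = k + 1 → B.card = k + 1 →
      (A ∩ B).card + 1 = k + 1 → (g A ∩ g B).card + 1 = k + 1)
    {K : Finset α} (hK : K.card = k) :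
    ∃ K' : Finset α, K'.card = k ∧ (supersets (k + 1) K).image g = supersets (k + 1) K' := by
  have hinjS : Set.InjOn g (supersets (k + 1) K) := hinj.mono fun A hA => (mem_supersets.1 hA).1
  have hcardS := card_supersets K
  rw [hK] at hcardS
  obtain ⟨K', hK', hsub⟩ := exists_subset_of_clique ((supersets (k + 1) K).image g)
    (by
      simp only [mem_image, mem_supersets]
      rintro _ ⟨A, ⟨hA, -⟩, rfl⟩
      exact hmaps A hA)
    (by
      simp only [mem_image, mem_supersets]
      rintro _ ⟨A, ⟨hA, hKA⟩, rfl⟩ _ ⟨B, ⟨hB, hKB⟩, rfl⟩ hne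
      exact hrel A B hA hB
        (card_inter_add_one_eq_of_ne hA hB (fun h => hne (h ▸ rfl)) hK hKA hKB))
    (by rw [card_image_of_injOn hinjS, hcardS]; omega)
  have hK'c : K'.card = k := by omega
  refine ⟨K', hK'c, eq_of_subset_of_card_le (fun C hC => mem_supersets.2 ⟨?_, hsub C hC⟩) ?_⟩
  · obtain ⟨A, hA, rfl⟩ := mem_image.1 hC
    exact hmaps A (mem_supersets.1 hA).1
  · have := card_supersets K'
    rw [hK'c] at this
    rw [card_image_of_injOn hinjS, hcardS, this]

lemma subset_iff_of_image_supersets_eq (hmaps : ∀ A : Finset α, A.card = k → (g A).card = k)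
    (hinj : {A : Finset α | A.card = k}.InjOn g) {K K' : Finset α}
    (hK : (supersets k K).image g = supersets k K') {A : Finset α} (hA : A.card = k) :
    K ⊆ A ↔ K' ⊆ g A := by
  constructor
  · intro hKA
    exact (mem_supersets.1 (hK ▸ mem_image_of_mem g (mem_supersets.2 ⟨hA, hKA⟩))).2
  · intro hKA
    obtain ⟨B, hB, hBA⟩ := mem_image.1 (hK ▸ mem_supersets.2 ⟨hmaps A hA, hKA⟩)
    rw [mem_supersets] at hB
    exact hinj hB.1 hA hBA ▸ hB.2

/-- Automorphisms of the Johnson graph `J(α, k)` are induced by permutations of `α`. -/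
theorem exists_perm_of_johnson (hk : 1 ≤ k) (hα : 2 * k + 1 ≤ Fintype.card α)
    (hmaps : ∀ A : Finset α, A.card = k → (g A).card = k)
    (hinj : {A : Finset α | A.card = k}.InjOn g)
    (hrel : ∀ A B : Finset α, A.card = k → B.card = k →
      ((A ∩ B).card + 1 = k ↔ (g A ∩ g B).card + 1 = k)) :
    ∃ π : Equiv.Perm α, ∀ A : Finset α, A.card = k → g A = A.image π := by
  induction k, hk using Nat.le_induction generalizing g with
  | base =>
    choose f hf using fun x : α => card_eq_one.1 (hmaps {x} (card_singleton x))
    have hf_inj : Function.Injective f := fun x y h =>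
      singleton_injective (hinj (card_singleton x) (card_singleton y) (by rw [hf, hf, h]))
    refine ⟨Equiv.ofBijective f hf_inj.bijective_of_finite, fun A hA => ?_⟩
    obtain ⟨x, rfl⟩ := card_eq_one.1 hA
    simp [hf]
  | succ k hk ih =>
    choose! φ hφc hφ using fun (K : Finset α) (hK : K.card = k) =>
      exists_image_supersets_eq (by omega) hmaps hinj (fun A B hA hB => (hrel A B hA hB).1) hK
    have hsub : ∀ K A : Finset α, K.card = k → A.card = k + 1 → (K ⊆ A ↔ φ K ⊆ g A) :=
      fun K A hK hA => subset_iff_of_image_supersets_eq hmaps hinj (hφ K hK) hA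
    have hφinj : {K : Finset α | K.card = k}.InjOn φ := fun K₁ h₁ K₂ h₂ he =>
      eq_of_forall_subset_iff h₁ h₂ (by omega) fun A hA => by
        rw [hsub K₁ A h₁ hA, hsub K₂ A h₂ hA, he]
    obtain ⟨π, hπ⟩ := ih (by omega) hφc hφinj <| by
      intro K₁ K₂ h₁ h₂
      by_cases he : K₁ = K₂
      · subst he
        simp [h₁, hφc K₁ h₁]
      rw [card_inter_add_one_iff_exists h₁ h₂ he, card_inter_add_one_iff_exists (hφc K₁ h₁)
        (hφc K₂ h₂) fun h => he (hφinj h₁ h₂ h)]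
      constructor
      · rintro ⟨A, hA, h₁A, h₂A⟩
        exact ⟨g A, hmaps A hA, (hsub K₁ A h₁ hA).1 h₁A, (hsub K₂ A h₂ hA).1 h₂A⟩
      · rintro ⟨B, hB, h₁B, h₂B⟩
        obtain ⟨A, hA, rfl⟩ := Finset.exists_eq_of_injOn hmaps hinj hB
        exact ⟨A, hA, (hsub K₁ A h₁ hA).2 h₁B, (hsub K₂ A h₂ hA).2 h₂B⟩
    refine ⟨π, fun A hA => (eq_of_subset_of_card_le (image_subset_of_forall_erase (by omega)
      fun x hx => ?_) ?_).symm⟩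
    · have hc : (A.erase x).card = k := by rw [card_erase_of_mem hx, hA]; rfl
      rw [← hπ _ hc]
      exact (hsub _ A hc hA).1 (erase_subset x A)
    · rw [hmaps A hA, card_image_of_injective _ π.injective, hA]

end Johnson

lemma Nat.choose_lt_choose_of_lt {a b k : ℕ} (hk : 1 ≤ k) (ha : k ≤ a + 1) (hab : a < b) :
    a.choose k < b.choose k := by
  obtain ⟨j, rfl⟩ := Nat.exists_eq_add_of_le' hk
  calc a.choose (j + 1) < a.choose j + a.choose (j + 1) :=
        Nat.lt_add_of_pos_left (Nat.choose_pos (by omega))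
    _ = (a + 1).choose (j + 1) := (Nat.choose_succ_succ a j).symm
    _ ≤ b.choose (j + 1) := Nat.choose_le_choose _ hab

lemma Nat.eq_of_choose_eq {a b k : ℕ} (hk : 1 ≤ k) (ha : k ≤ a + 1) (hb : k ≤ b + 1)
    (h : a.choose k = b.choose k) : a = b := by
  rcases lt_trichotomy a b with hab | hab | hab
  · exact absurd h (Nat.choose_lt_choose_of_lt hk ha hab).ne
  · exact hab
  · exact absurd h (Nat.choose_lt_choose_of_lt hk hb hab).ne'

lemma SimpleGraph.Iso.card_filter_adj_adj {V W : Type*} [Fintype V] [Fintype W]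
    {G : SimpleGraph V} {H : SimpleGraph W} [DecidableRel G.Adj] [DecidableRel H.Adj]
    (f : G ≃g H) (a b : V) :
    (univ.filter fun c => H.Adj c (f a) ∧ H.Adj c (f b)).card =
      (univ.filter fun c => G.Adj c a ∧ G.Adj c b).card := by
  refine card_bij' (fun c _ => f.symm c) (fun c _ => f c) ?_ ?_ (by simp) (by simp)
  · intro c hc
    simp only [mem_filter, mem_univ, true_and] at hc ⊢
    rwa [← f.map_rel_iff, ← f.map_rel_iff, RelIso.apply_symm_apply]
  · intro c hc
    simp only [mem_filter, mem_univ, true_and] at hc ⊢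
    rwa [f.map_rel_iff, f.map_rel_iff]

lemma Finset.image_swap_eq_self {α : Type*} [DecidableEq α] {A : Finset α} {x y : α}
    (h : x ∈ A ↔ y ∈ A) : A.image (Equiv.swap x y) = A := by
  ext z
  rw [← Equiv.coe_toEmbedding, ← map_eq_image, mem_map_equiv, Equiv.symm_swap]
  rcases eq_or_ne z x with rfl | hzx
  · rw [Equiv.swap_apply_left, h]
  rcases eq_or_ne z y with rfl | hzy
  · rw [Equiv.swap_apply_right, h]
  · rw [Equiv.swap_apply_of_ne_of_ne hzx hzy]

abbrev KneserVertex (N k : ℕ) := {s : Finset (Fin N) // s.card = k}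

namespace KneserGraph
variable {N k : ℕ}

instance : DecidableRel (kneserGraph N k).Adj :=
  fun A B => inferInstanceAs (Decidable (Disjoint A.1 B.1 ∧ A ≠ B))

def permIso (π : Equiv.Perm (Fin N)) : kneserGraph N k ≃g kneserGraph N k where
  toEquiv := π.finsetCongr.subtypeEquiv fun A => by simp
  map_rel_iff' := by simp [kneserGraph, Equiv.finsetCongr, disjoint_map]

lemma permIso_apply (π : Equiv.Perm (Fin N)) (A : KneserVertex N k) :
    (permIso π A).1 = A.1.image π := by
  simp [permIso, Equiv.finsetCongr, map_eq_image]

lemma card_filter_adj_adj (hk : 1 ≤ k) (A B : KneserVertex N k) :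
    (univ.filter fun C => (kneserGraph N k).Adj C A ∧ (kneserGraph N k).Adj C B).card =
      (N - (A.1 ∪ B.1).card).choose k := by
  rw [show N - (A.1 ∪ B.1).card = (A.1 ∪ B.1)ᶜ.card by rw [card_compl, Fintype.card_fin],
    ← card_powersetCard, ← card_map (Function.Embedding.subtype _)]
  congr 1
  ext C
  simp only [mem_map, mem_filter, mem_univ, true_and, mem_powersetCard,
    subset_compl_iff_disjoint_right, disjoint_union_right, Function.Embedding.subtype_apply]
  constructor
  · rintro ⟨C, ⟨⟨hCA, -⟩, hCB, -⟩, rfl⟩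
    exact ⟨⟨hCA, hCB⟩, C.2⟩
  · rintro ⟨⟨hCA, hCB⟩, hC⟩
    have hne : ∀ D : KneserVertex N k, Disjoint C D.1 → (⟨C, hC⟩ : KneserVertex N k) ≠ D := by
      rintro D hD rfl
      rw [disjoint_self, bot_eq_empty] at hD
      rw [hD, card_empty] at hC
      omega
    exact ⟨⟨C, hC⟩, ⟨⟨hCA, hne A hCA⟩, hCB, hne B hCB⟩, rfl⟩

lemma card_inter_apply (hk : 1 ≤ k) (hN : 3 * k ≤ N + 1)
    (f : kneserGraph N k ≃g kneserGraph N k) (A B : KneserVertex N k) :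
    ((f A).1 ∩ (f B).1).card = (A.1 ∩ B.1).card := by
  have hcn := f.card_filter_adj_adj A B
  rw [card_filter_adj_adj hk, card_filter_adj_adj hk] at hcn
  have hAB := card_union_add_card_inter A.1 B.1
  have hfAB := card_union_add_card_inter (f A).1 (f B).1
  have := card_le_univ (A.1 ∪ B.1)
  have := card_le_univ ((f A).1 ∪ (f B).1)
  rw [Fintype.card_fin] at *
  rw [A.2, B.2] at hAB
  rw [(f A).2, (f B).2] at hfAB
  have := Nat.eq_of_choose_eq hk (by omega) (by omega) hcn
  omega

theorem exists_perm_of_aut (hk : 2 ≤ k) (hN : 3 * k ≤ N + 1)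
    (f : kneserGraph N k ≃g kneserGraph N k) :
    ∃ π : Equiv.Perm (Fin N), ∀ A : KneserVertex N k, (f A).1 = A.1.image π := by
  set g : Finset (Fin N) → Finset (Fin N) := fun A => if h : A.card = k then (f ⟨A, h⟩).1 else A
  have hg : ∀ A (hA : A.card = k), g A = (f ⟨A, hA⟩).1 := fun A hA => dif_pos hA
  obtain ⟨π, hπ⟩ := exists_perm_of_johnson (g := g) (by omega) (by rw [Fintype.card_fin]; omega)
    (fun A hA => hg A hA ▸ (f _).2)
    (fun A hA B hB h => by
      rw [hg A hA, hg B hB] at h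
      exact congrArg Subtype.val (f.injective (Subtype.ext h)))
    (fun A B hA hB => by rw [hg A hA, hg B hB, card_inter_apply (by omega) hN])
  exact ⟨π, fun A => hg A.1 A.2 ▸ hπ A.1 A.2⟩

theorem isDeterminingSet_iff (hk : 2 ≤ k) (hN : 3 * k ≤ N + 1) (S : Set (KneserVertex N k)) :
    IsDeterminingSet (kneserGraph N k) S ↔
      ∀ x y : Fin N, (∀ A ∈ S, x ∈ A.1 ↔ y ∈ A.1) → x = y := by
  constructor
  · intro hS x y hxy
    by_contra hne
    have hid := hS (permIso (Equiv.swap x y)) (RelIso.refl _) fun A hA =>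
      Subtype.ext ((permIso_apply _ A).trans (image_swap_eq_self (hxy A hA)))
    obtain ⟨A, hxA, hAy, hA⟩ := exists_subsuperset_card_eq (n := k)
      (singleton_subset_iff.2 (mem_erase.2 ⟨hne, mem_univ x⟩))
      (by rw [card_singleton]; omega)
      (by rw [card_erase_of_mem (mem_univ y), card_univ, Fintype.card_fin]; omega)
    have hy := congrArg Subtype.val (DFunLike.congr_fun hid ⟨A, hA⟩)
    rw [permIso_apply] at hy
    have : y ∈ A.image (Equiv.swap x y) :=
      mem_image.2 ⟨x, singleton_subset_iff.1 hxA, Equiv.swap_apply_left x y⟩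
    rw [hy] at this
    exact (mem_erase.1 (hAy this)).1 rfl
  · intro hsep f h hfh
    obtain ⟨π, hπ⟩ := exists_perm_of_aut hk hN (f.trans h.symm)
    have hfix : ∀ A ∈ S, A.1.image π = A.1 := fun A hA => by
      rw [← hπ A]
      simp [hfh A hA]
    have hπ1 : ∀ x, π x = x := fun x => (hsep _ _ fun A hA => by
      rw [← π.injective.mem_finset_image, hfix A hA]).symm
    ext A : 1
    have hA : (f.trans h.symm) A = A := Subtype.ext <| by
      rw [hπ A, show π = 1 from Equiv.ext hπ1, Equiv.Perm.coe_one, image_id]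
    exact h.symm_apply_eq.1 hA

end KneserGraph

section Family
variable {β : Type*} [DecidableEq β]

def pointDegree (R : Finset (Finset β)) (c : β) : ℕ := #{e ∈ R | c ∈ e}

lemma pointDegree_union {R₁ R₂ : Finset (Finset β)} (h : Disjoint R₁ R₂) (c : β) :
    pointDegree (R₁ ∪ R₂) c = pointDegree R₁ c + pointDegree R₂ c := by
  rw [pointDegree, filter_union, card_union_of_disjoint (disjoint_filter_filter h)]; rfl

lemma pointDegree_sdiff_add {R₁ R₂ : Finset (Finset β)} (h : R₂ ⊆ R₁) (c : β) :
    pointDegree (R₁ \ R₂) c + pointDegree R₂ c = pointDegree R₁ c := by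
  rw [← pointDegree_union sdiff_disjoint, sdiff_union_of_subset h]

lemma pointDegree_image_singleton (U : Finset β) (c : β) :
    pointDegree (U.image singleton) c = if c ∈ U then 1 else 0 := by
  rw [pointDegree, filter_image, card_image_of_injective _ singleton_injective]
  split_ifs with hc
  · exact card_eq_one.2 ⟨c, by ext; simp only [mem_filter, mem_singleton]; grind⟩
  · exact card_eq_zero.2 (filter_eq_empty_iff.2 fun x hx h => hc (mem_singleton.1 h ▸ hx))

lemma exists_family_of_graph [Fintype β] {k : ℕ} {U : Finset β} {E : Finset (Finset β)}
    (hE : ∀ e ∈ E, e.card = 2) (hdeg : ∀ c, pointDegree E c + (if c ∈ U then 1 else 0) = k) :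
    ∃ R : Finset (Finset β), 2 * R.card = Fintype.card β * k + U.card ∧
      ∀ c, pointDegree R c = k := by
  have hdisj : Disjoint (U.image singleton) E := disjoint_left.2 fun e he he' => by
    obtain ⟨x, -, rfl⟩ := mem_image.1 he
    simpa using hE _ he'
  have hR : ∀ c, pointDegree (U.image singleton ∪ E) c = k := fun c => by
    rw [pointDegree_union hdisj, pointDegree_image_singleton, add_comm, hdeg]
  refine ⟨U.image singleton ∪ E, ?_, hR⟩
  have hsum := sum_card (B := U.image singleton ∪ E) hR
  rw [sum_union hdisj, sum_image fun x _ y _ h => singleton_injective h, sum_congr rfl hE,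
    sum_const] at hsum
  simp only [card_singleton, sum_const, smul_eq_mul, mul_one] at hsum
  rw [card_union_of_disjoint hdisj, card_image_of_injective _ singleton_injective]
  omega

end Family

lemma ZMod.natCast_ne_zero_of_lt {d n : ℕ} (h0 : 0 < n) (hn : n < d) : (n : ZMod d) ≠ 0 := by
  intro h
  have := congrArg ZMod.val h
  rw [ZMod.val_cast_of_lt hn, ZMod.val_zero] at this
  omega

section Circulant
variable {d : ℕ} [NeZero d]

lemma ZMod.natCast_eq_iff_val_eq {c : ZMod d} {n : ℕ} (hn : n < d) : c = n ↔ c.val = n := by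
  rw [← ZMod.val_injective d |>.eq_iff, ZMod.val_cast_of_lt hn]

def cayleyEdges (Δ : Finset (ZMod d)) : Finset (Finset (ZMod d)) :=
  (univ ×ˢ Δ).image fun p => {p.1, p.1 + p.2}

variable {Δ : Finset (ZMod d)}

lemma mem_cayleyEdges {e : Finset (ZMod d)} :
    e ∈ cayleyEdges Δ ↔ ∃ i, ∃ δ ∈ Δ, {i, i + δ} = e := by
  simp [cayleyEdges]

lemma card_of_mem_cayleyEdges (h0 : 0 ∉ Δ) {e : Finset (ZMod d)} (he : e ∈ cayleyEdges Δ) :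
    e.card = 2 := by
  obtain ⟨i, δ, hδ, rfl⟩ := mem_cayleyEdges.1 he
  exact card_pair fun h => h0 (by rwa [show δ = 0 by linear_combination -h] at hδ)

lemma pointDegree_cayleyEdges (h0 : 0 ∉ Δ) (hneg : ∀ δ ∈ Δ, -δ ∈ Δ) (c : ZMod d) :
    pointDegree (cayleyEdges Δ) c = Δ.card := by
  have : {e ∈ cayleyEdges Δ | c ∈ e} = Δ.image fun δ => {c, c + δ} := by
    ext e
    simp only [mem_filter, mem_cayleyEdges, mem_image]
    constructor
    · rintro ⟨⟨i, δ, hδ, rfl⟩, hc⟩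
      rcases mem_insert.1 hc with rfl | hc
      · exact ⟨δ, hδ, rfl⟩
      · rw [mem_singleton] at hc
        subst hc
        exact ⟨-δ, hneg δ hδ, by rw [add_neg_cancel_right, pair_comm]⟩
    · rintro ⟨δ, hδ, rfl⟩
      exact ⟨⟨c, δ, hδ, rfl⟩, mem_insert_self c _⟩
  rw [pointDegree, this, card_image_of_injOn]
  intro δ hδ δ' hδ' h
  have h : ({c, c + δ} : Finset (ZMod d)) = {c, c + δ'} := h
  have : c + δ ∈ ({c, c + δ'} : Finset (ZMod d)) := h ▸ mem_insert_of_mem (mem_singleton_self _)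
  simp only [mem_insert, mem_singleton] at this
  rcases this with h' | h'
  · exact absurd (by rwa [show δ = 0 by linear_combination h'] at hδ) h0
  · exact add_left_cancel h'

def consecPairs (d a r : ℕ) [NeZero d] : Finset (Finset (ZMod d)) :=
  (range r).image fun i => {((a + 2 * i : ℕ) : ZMod d), ((a + 2 * i : ℕ) : ZMod d) + 1}

lemma consecPairs_subset (h1 : 1 ∈ Δ) (a r : ℕ) : consecPairs d a r ⊆ cayleyEdges Δ := by
  intro e he
  obtain ⟨i, -, rfl⟩ := mem_image.1 he
  exact mem_cayleyEdges.2 ⟨_, 1, h1, rfl⟩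

lemma disjoint_consecPairs (h0 : 0 ∉ Δ) (h1 : 1 ∉ Δ) (hneg : ∀ δ ∈ Δ, -δ ∈ Δ) (a r : ℕ) :
    Disjoint (cayleyEdges Δ) (consecPairs d a r) := by
  refine disjoint_left.2 fun e he he' => ?_
  obtain ⟨i, δ, hδ, rfl⟩ := mem_cayleyEdges.1 he
  obtain ⟨j, -, hj⟩ := mem_image.1 he'
  have hi : i ∈ ({i, i + δ} : Finset (ZMod d)) := mem_insert_self _ _
  have hiδ : i + δ ∈ ({i, i + δ} : Finset (ZMod d)) := mem_insert_of_mem (mem_singleton_self _)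
  rw [← hj] at hi hiδ
  simp only [mem_insert, mem_singleton] at hi hiδ
  rcases hi with rfl | rfl <;> rcases hiδ with h | h
  · exact h0 (by rwa [show δ = 0 by linear_combination h] at hδ)
  · exact h1 (by rwa [show δ = 1 by linear_combination h] at hδ)
  · exact h1 (by simpa [show δ = -1 by linear_combination h] using hneg δ hδ)
  · exact h0 (by rwa [show δ = 0 by linear_combination h] at hδ)

lemma pointDegree_consecPairs {a r : ℕ} (h : a + 2 * r ≤ d) (c : ZMod d) :
    pointDegree (consecPairs d a r) c = if a ≤ c.val ∧ c.val < a + 2 * r then 1 else 0 := by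
  have hmem : ∀ i < r, c ∈ ({((a + 2 * i : ℕ) : ZMod d), ((a + 2 * i : ℕ) : ZMod d) + 1} :
      Finset (ZMod d)) ↔ c.val = a + 2 * i ∨ c.val = a + 2 * i + 1 := fun i hi => by
    rw [mem_insert, mem_singleton, ← Nat.cast_succ, ZMod.natCast_eq_iff_val_eq (by omega),
      ZMod.natCast_eq_iff_val_eq (by omega)]
  rw [pointDegree, consecPairs, filter_image, card_image_of_injOn]
  · have : {i ∈ range r | c ∈ ({((a + 2 * i : ℕ) : ZMod d), ((a + 2 * i : ℕ) : ZMod d) + 1} :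
        Finset (ZMod d))} = if a ≤ c.val ∧ c.val < a + 2 * r then {(c.val - a) / 2} else ∅ := by
      ext i
      simp only [mem_filter, mem_range]
      split_ifs with hc
      · rw [mem_singleton]
        constructor
        · rintro ⟨hi, hci⟩
          rw [hmem i hi] at hci
          omega
        · rintro rfl
          exact ⟨by omega, (hmem _ (by omega)).2 (by omega)⟩
      · simp only [notMem_empty, iff_false, not_and]
        intro hi hci
        rw [hmem i hi] at hci
        omega
    rw [this]
    split_ifs <;> rfl
  · intro i hi j hj _
    simp only [coe_filter, mem_range] at hi hj
    have := (hmem i hi.1).1 hi.2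
    have := (hmem j hj.1).1 hj.2
    omega

lemma card_filter_val_lt {u : ℕ} (hu : u ≤ d) : #{c : ZMod d | c.val < u} = u := by
  refine (card_nbij' ZMod.val (fun i => (i : ZMod d)) (fun c hc => ?_) (fun i hi => ?_)
    (fun c _ => ZMod.natCast_zmod_val c) (fun i hi => ZMod.val_cast_of_lt ?_)).trans (card_range u)
  · simpa using hc
  · simp only [coe_range, Set.mem_Iio] at hi
    rw [mem_coe, mem_filter]
    exact ⟨mem_univ _, by rwa [ZMod.val_cast_of_lt (by omega)]⟩
  · simp only [coe_range, Set.mem_Iio] at hi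
    omega

def symmInterval (d a b : ℕ) [NeZero d] : Finset (ZMod d) :=
  (Icc a b).image (fun i : ℕ => (i : ZMod d)) ∪ (Icc a b).image fun i : ℕ => -(i : ZMod d)

section symmInterval
variable {a b : ℕ}

lemma neg_mem_symmInterval {x : ZMod d} (hx : x ∈ symmInterval d a b) :
    -x ∈ symmInterval d a b := by
  simp only [symmInterval, mem_union, mem_image] at hx ⊢
  rcases hx with ⟨i, hi, rfl⟩ | ⟨i, hi, rfl⟩
  · exact Or.inr ⟨i, hi, rfl⟩
  · exact Or.inl ⟨i, hi, (neg_neg _).symm⟩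

lemma zero_notMem_symmInterval (ha : 1 ≤ a) (hb : 2 * b < d) :
    (0 : ZMod d) ∉ symmInterval d a b := by
  simp only [symmInterval, mem_union, mem_image, mem_Icc, neg_eq_zero, or_self_iff]
  rintro ⟨i, hi, h⟩
  exact ZMod.natCast_ne_zero_of_lt (by omega) (by omega) h

lemma card_symmInterval (ha : 1 ≤ a) (hb : 2 * b < d) :
    (symmInterval d a b).card = 2 * (b + 1 - a) := by
  have hinj : Set.InjOn (fun i : ℕ => (i : ZMod d)) (Icc a b) := fun i hi j hj h => by
    simp only [coe_Icc, Set.mem_Icc] at hi hj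
    rwa [ZMod.natCast_eq_iff_val_eq (by omega), ZMod.val_cast_of_lt (by omega)] at h
  rw [symmInterval, card_union_of_disjoint, card_image_of_injOn hinj,
    card_image_of_injOn fun i hi j hj h => hinj hi hj (neg_inj.1 h), Nat.card_Icc]
  · omega
  · refine disjoint_left.2 fun x hx hx' => ?_
    obtain ⟨i, hi, rfl⟩ := mem_image.1 hx
    obtain ⟨j, hj, hji⟩ := mem_image.1 hx'
    rw [mem_Icc] at hi hj
    have hji' : ((j + i : ℕ) : ZMod d) = 0 := by push_cast; rw [← hji]; ring
    exact ZMod.natCast_ne_zero_of_lt (by omega) (by omega) hji'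

lemma one_notMem_symmInterval (ha : 2 ≤ a) (hb : 2 * b < d) :
    (1 : ZMod d) ∉ symmInterval d a b := by
  simp only [symmInterval, mem_union, mem_image, mem_Icc]
  rintro (⟨i, hi, h⟩ | ⟨i, hi, h⟩)
  · rw [← Nat.cast_one, eq_comm, ZMod.natCast_eq_iff_val_eq (by omega),
      ZMod.val_cast_of_lt (by omega)] at h
    omega
  · have : ((i + 1 : ℕ) : ZMod d) = 0 := by push_cast; rw [← h]; ring
    exact ZMod.natCast_ne_zero_of_lt (by omega) (by omega) this

lemma one_mem_symmInterval (hb : 1 ≤ b) : (1 : ZMod d) ∈ symmInterval d 1 b :=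
  mem_union_left _ (mem_image.2 ⟨1, mem_Icc.2 ⟨le_rfl, hb⟩, Nat.cast_one⟩)

end symmInterval

lemma exists_graph_of_one_mem (h0 : 0 ∉ Δ) (hneg : ∀ δ ∈ Δ, -δ ∈ Δ) (h1 : 1 ∈ Δ) {u : ℕ}
    (hu : u ≤ d) (hue : Even u) :
    ∃ (U : Finset (ZMod d)) (E : Finset (Finset (ZMod d))), U.card = u ∧
      (∀ e ∈ E, e.card = 2) ∧ ∀ c, pointDegree E c + (if c ∈ U then 1 else 0) = Δ.card := by
  obtain ⟨r, rfl⟩ := hue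
  refine ⟨({c | c.val < r + r} : Finset (ZMod d)), cayleyEdges Δ \ consecPairs d 0 r,
    card_filter_val_lt hu, fun e he => card_of_mem_cayleyEdges h0 (mem_sdiff.1 he).1, fun c => ?_⟩
  have := pointDegree_sdiff_add (consecPairs_subset h1 0 r) c
  rw [pointDegree_cayleyEdges h0 hneg, pointDegree_consecPairs (by omega)] at this
  simp only [mem_filter, mem_univ, true_and]
  split_ifs at this ⊢ <;> omega

lemma exists_graph_of_one_notMem (h0 : 0 ∉ Δ) (hneg : ∀ δ ∈ Δ, -δ ∈ Δ) (h1 : 1 ∉ Δ)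
    (hd : 2 ≤ d) {u : ℕ} (hu : u ≤ d) (hdu : Even (d - u)) :
    ∃ (U : Finset (ZMod d)) (E : Finset (Finset (ZMod d))), U.card = u ∧
      (∀ e ∈ E, e.card = 2) ∧ ∀ c, pointDegree E c + (if c ∈ U then 1 else 0) = Δ.card + 1 := by
  obtain ⟨r, hr⟩ := hdu
  have h10 : (0 : ZMod d) ∉ ({1} : Finset (ZMod d)) := by
    rw [mem_singleton, ← Nat.cast_one]
    exact (ZMod.natCast_ne_zero_of_lt (d := d) one_pos (by omega)).symm
  have hcard : ∀ e ∈ consecPairs d u r, e.card = 2 := fun e he =>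
    card_of_mem_cayleyEdges h10 (consecPairs_subset (mem_singleton_self 1) u r he)
  refine ⟨({c | c.val < u} : Finset (ZMod d)), cayleyEdges Δ ∪ consecPairs d u r,
    card_filter_val_lt hu, fun e he => (mem_union.1 he).elim (card_of_mem_cayleyEdges h0) (hcard e),
    fun c => ?_⟩
  rw [pointDegree_union (disjoint_consecPairs h0 h1 hneg u r), pointDegree_cayleyEdges h0 hneg,
    pointDegree_consecPairs (by omega)]
  have := ZMod.val_lt c
  simp only [mem_filter, mem_univ, true_and]
  split_ifs <;> omega

theorem exists_graph {k u : ℕ} (hk : 2 ≤ k) (hkd : k + 1 ≤ d) (hu : u ≤ d)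
    (hpar : Even (d * k + u)) :
    ∃ (U : Finset (ZMod d)) (E : Finset (Finset (ZMod d))), U.card = u ∧
      (∀ e ∈ E, e.card = 2) ∧ ∀ c, pointDegree E c + (if c ∈ U then 1 else 0) = k := by
  rcases Nat.even_or_odd k with ⟨q, rfl⟩ | hodd
  · have hue : Even u := by simpa [Nat.even_add, Nat.even_mul] using hpar
    have := exists_graph_of_one_mem (zero_notMem_symmInterval (b := q) le_rfl (by omega))
      (fun _ => neg_mem_symmInterval) (one_mem_symmInterval (d := d) (b := q) (by omega)) hu hue
    rwa [card_symmInterval le_rfl (by omega), show 2 * (q + 1 - 1) = q + q by omega] at this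
  have hpar' : Even d ↔ Even u := by
    simpa [Nat.even_add, Nat.even_mul, Nat.not_even_iff_odd.2 hodd] using hpar
  rcases (by omega : k + 1 < d ∨ k + 1 = d) with hkd | rfl
  · obtain ⟨q, rfl⟩ := hodd
    have := exists_graph_of_one_notMem (zero_notMem_symmInterval (b := q + 1) (by omega)
      (by omega)) (fun _ => neg_mem_symmInterval)
      (one_notMem_symmInterval (b := q + 1) le_rfl (by omega))
      (by omega) hu ((Nat.even_sub hu).2 hpar')
    rwa [card_symmInterval (by omega) (by omega), show 2 * (q + 1 + 1 - 2) + 1 = 2 * q + 1 by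
      omega] at this
  · have := exists_graph_of_one_mem (Δ := univ.erase 0) (notMem_erase 0 univ)
      (fun δ hδ => mem_erase.2 ⟨neg_ne_zero.2 (ne_of_mem_erase hδ), mem_univ _⟩)
      (mem_erase.2 ⟨by simpa using ZMod.natCast_ne_zero_of_lt (d := k + 1) one_pos (by omega),
        mem_univ _⟩) hu (hpar'.1 (by simpa [Nat.even_add_one] using hodd))
    rwa [card_erase_of_mem (mem_univ 0), card_univ, ZMod.card, Nat.add_sub_cancel] at this

theorem exists_family {k N : ℕ} (hk : 2 ≤ k) (hkd : k + 1 ≤ d) (h₁ : d * k ≤ 2 * N)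
    (h₂ : 2 * N ≤ d * (k + 1)) :
    ∃ R : Finset (Finset (ZMod d)), R.card = N ∧ ∀ c, pointDegree R c = k := by
  have hdk : d * (k + 1) = d * k + d := by ring
  obtain ⟨U, E, hU, hE, hdeg⟩ := exists_graph (u := 2 * N - d * k) hk hkd (by omega)
    ⟨N, by omega⟩
  obtain ⟨R, hR, hRdeg⟩ := exists_family_of_graph hE hdeg
  rw [ZMod.card, hU] at hR
  exact ⟨R, by omega, hRdeg⟩

end Circulant

lemma two_mul_card_le_sum_card_add {ι β : Type*} [Fintype ι] [DecidableEq β]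
    {f : ι → Finset β} (hf : Function.Injective f) {T : Finset β} (hT : ∀ x, f x ⊆ T) :
    2 * Fintype.card ι ≤ ∑ x, (f x).card + T.card + 2 := by
  have h₀ : #{x | f x = ∅} ≤ 1 := card_le_one.2 fun a ha b hb =>
    hf ((mem_filter.1 ha).2.trans (mem_filter.1 hb).2.symm)
  have h₁ : #{x | (f x).card = 1} ≤ T.card :=
    calc #{x | (f x).card = 1} ≤ (T.powersetCard 1).card :=
          card_le_card_of_injOn f (fun x hx => mem_powersetCard.2 ⟨hT x, (mem_filter.1 hx).2⟩)
            hf.injOn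
      _ = T.card := by rw [card_powersetCard, Nat.choose_one_right]
  have hpt : ∀ x, 2 ≤ (f x).card + 2 * (if f x = ∅ then 1 else 0) +
      (if (f x).card = 1 then 1 else 0) := fun x => by
    by_cases h : f x = ∅
    · simp [h]
    · have := card_ne_zero.2 (nonempty_iff_ne_empty.2 h)
      split_ifs <;> omega
  calc 2 * Fintype.card ι = ∑ _x : ι, 2 := by rw [sum_const, card_univ, smul_eq_mul, mul_comm]
    _ ≤ ∑ x, ((f x).card + 2 * (if f x = ∅ then 1 else 0) +
        (if (f x).card = 1 then 1 else 0)) := sum_le_sum fun x _ => hpt x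
    _ = ∑ x, (f x).card + 2 * #{x | f x = ∅} + #{x | (f x).card = 1} := by
      rw [sum_add_distrib, sum_add_distrib, ← mul_sum, sum_boole, sum_boole, Nat.cast_id,
        Nat.cast_id]
    _ ≤ ∑ x, (f x).card + T.card + 2 := by omega

lemma detNumber_eq_of_le {V : Type*} {G : SimpleGraph V} {d : ℕ} {S : Finset V}
    (hS : IsDeterminingSet G S) (hSd : S.card ≤ d)
    (h : ∀ T : Finset V, IsDeterminingSet G T → d ≤ T.card) : detNumber G = d := by
  have hmem : S.card ∈ {m | ∃ T : Finset V, T.card = m ∧ IsDeterminingSet G T} := ⟨S, rfl, hS⟩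
  refine le_antisymm ((Nat.sInf_le hmem).trans hSd) (le_csInf ⟨_, hmem⟩ ?_)
  rintro _ ⟨T, rfl, hT⟩
  exact h T hT

namespace KneserGraph
variable {N k : ℕ}

lemma sum_card_filter_mem (S : Finset (KneserVertex N k)) :
    ∑ x : Fin N, #{A ∈ S | x ∈ A.1} = S.card * k := by
  have := sum_card_bipartiteAbove_eq_sum_card_bipartiteBelow (s := S) (t := univ)
    (r := fun A x => x ∈ A.1)
  simp only [bipartiteAbove, bipartiteBelow, filter_mem_eq_inter, univ_inter] at this
  rw [← this, sum_congr rfl fun A _ => A.2, sum_const, smul_eq_mul]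

theorem two_mul_le_of_separates {S : Finset (KneserVertex N k)}
    (hS : ∀ x y : Fin N, (∀ A ∈ S, x ∈ A.1 ↔ y ∈ A.1) → x = y) :
    2 * N ≤ S.card * (k + 1) + 2 := by
  have hinj : Function.Injective fun x : Fin N => {A ∈ S | x ∈ A.1} := fun x y h =>
    hS x y fun A hA => by simpa [hA] using congrArg (A ∈ ·) h
  have := two_mul_card_le_sum_card_add hinj fun x => filter_subset _ S
  rw [Fintype.card_fin, sum_card_filter_mem] at this
  linarith

theorem exists_separating_of_family {β : Type*} [Fintype β] [DecidableEq β]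
    {R : Finset (Finset β)} (hR : R.card = N) (hdeg : ∀ c, pointDegree R c = k) :
    ∃ S : Finset (KneserVertex N k), S.card ≤ Fintype.card β ∧
      ∀ x y : Fin N, (∀ A ∈ S, x ∈ A.1 ↔ y ∈ A.1) → x = y := by
  let e := R.equivFinOfCardEq hR
  have hcol : ∀ c, #{x | c ∈ (e.symm x : Finset β)} = k := fun c => by
    rw [← hdeg c, pointDegree]
    refine card_bij (fun x _ => (e.symm x : Finset β)) (fun x hx => ?_)
      (fun x _ y _ h => e.symm.injective (Subtype.ext h)) (fun A hA => ?_)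
    · exact mem_filter.2 ⟨(e.symm x).2, (mem_filter.1 hx).2⟩
    · refine ⟨e ⟨A, (mem_filter.1 hA).1⟩, ?_, by simp⟩
      simpa using (mem_filter.1 hA).2
  refine ⟨univ.image fun c => ⟨({x | c ∈ (e.symm x : Finset β)} : Finset (Fin N)), hcol c⟩,
    card_image_le.trans card_univ.le, fun x y hxy => e.symm.injective (Subtype.ext ?_)⟩
  ext c
  simpa using hxy _ (mem_image_of_mem _ (mem_univ c))

end KneserGraph

lemma three_mul_le_of_mul_lt {d k n : ℕ} (hkd : k + 1 ≤ d)
    (h : (d - 1) * (k + 1) < 2 * n) : 3 * k ≤ n + 2 := by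
  -- `k (k + 1)` is even, so `2n ≥ k (k + 1) + 2 ≥ 6k - 4`.
  obtain ⟨m, hm⟩ := Nat.even_mul_succ_self k
  have : k * (k + 1) ≤ (d - 1) * (k + 1) := Nat.mul_le_mul_right _ (by omega)
  have : 6 * k ≤ k * (k + 1) + 6 := by
    rcases Nat.lt_or_ge k 4 with hk4 | hk4
    · interval_cases k <;> omega
    · nlinarith
  omega

theorem stmt_13_general (d k n : ℕ) (hk3 : 3 ≤ k + 1) (hkd : k + 1 ≤ d)
    (hn1 : (d - 1) * (k + 1) / 2 < n) (hn2 : n < d * (k + 1) / 2) :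
    detNumber (kneserGraph (n + 1) k) = d := by
  have hlow : (d - 1) * (k + 1) < 2 * n := by
    have := (Nat.div_lt_iff_lt_mul two_pos).1 hn1; omega
  have hup : 2 * (n + 1) ≤ d * (k + 1) := by
    have := (Nat.le_div_iff_mul_le two_pos).1 hn2; omega
  have hd : (d - 1) * (k + 1) + (k + 1) = d * (k + 1) := by
    rw [← Nat.succ_mul, Nat.succ_eq_add_one, Nat.sub_add_cancel (by omega)]
  have hdk : d * (k + 1) = d * k + d := by ring
  have hk2 : 2 ≤ k := by omega
  have hN : 3 * k ≤ n + 1 + 1 := three_mul_le_of_mul_lt hkd hlow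
  have : NeZero d := ⟨by omega⟩
  obtain ⟨R, hR, hdeg⟩ := exists_family (d := d) hk2 hkd (by omega) hup
  obtain ⟨S, hSd, hS⟩ := KneserGraph.exists_separating_of_family hR hdeg
  refine detNumber_eq_of_le ((KneserGraph.isDeterminingSet_iff hk2 hN _).2 hS)
    (hSd.trans (ZMod.card d).le) fun T hT => ?_
  have := KneserGraph.two_mul_le_of_separates ((KneserGraph.isDeterminingSet_iff hk2 hN _).1 hT)
  by_contra! hTd
  have := Nat.mul_le_mul_right (k + 1) (by omega : T.card ≤ d - 1)
  omega

theorem stmt_13 (d k n : ℕ) (hk : 0 < k) (hk3 : 3 ≤ k + 1) (hkd : k + 1 ≤ d)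
    (hn1 : (d - 1) * (k + 1) / 2 < n) (hn2 : n < d * (k + 1) / 2) :
    detNumber (kneserGraph (n + 1) k) = d :=
  stmt_13_general d k n hk3 hkd hn1 hn2
end

section
/- The only Kneser graph K_{n:k} with n ≥ 2k+1 whose determining number equals 2 is K_{3:1}. -/
open Finset

theorem Equiv.Perm.eq_one_of_card_le_card_fixed_add_one {α : Type*} [Fintype α]
    [DecidableEq α] (e : Equiv.Perm α) (s : Finset α) (hs : Fintype.card α ≤ #s + 1)
    (he : ∀ a ∈ s, e a = a) : e = 1 := by
  have hsupp : e.support ⊆ sᶜ := fun a ha => mem_compl.2 fun has => mem_support.1 ha (he a has)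
  have hle : #e.support ≤ 1 := (card_le_card hsupp).trans (by rw [card_compl]; omega)
  have hzero : #e.support = 0 := by have := e.card_support_ne_one; omega
  exact support_eq_empty_iff.1 (card_eq_zero.1 hzero)

section DeterminingSet

variable {V : Type*} {G : SimpleGraph V}

theorem isDeterminingSet_of_card_le_card_add_one [Fintype V] [DecidableEq V] (S : Finset V)
    (hS : Fintype.card V ≤ #S + 1) : IsDeterminingSet G (S : Set V) := by
  intro g h hgh
  have he := Equiv.Perm.eq_one_of_card_le_card_fixed_add_one (g.toEquiv.trans h.toEquiv.symm) S hS
    fun v hv => (Equiv.symm_apply_eq _).2 (hgh v hv)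
  exact RelIso.ext fun v => (Equiv.symm_apply_eq h.toEquiv).1 (Equiv.ext_iff.1 he v)

theorem isDeterminingSet_univ [Fintype V] : IsDeterminingSet G ((univ : Finset V) : Set V) :=
  fun g h hgh => RelIso.ext fun v => hgh v (by simp)

theorem detNumber_le {S : Finset V} (hS : IsDeterminingSet G (S : Set V)) : detNumber G ≤ #S :=
  Nat.sInf_le ⟨S, rfl, hS⟩

theorem exists_isDeterminingSet_card_eq_detNumber [Fintype V] :
    ∃ S : Finset V, #S = detNumber G ∧ IsDeterminingSet G (S : Set V) := by
  unfold detNumber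
  exact Nat.sInf_mem (s := {m | ∃ S : Finset V, #S = m ∧ IsDeterminingSet G (S : Set V)})
    ⟨_, univ, rfl, isDeterminingSet_univ⟩

theorem le_detNumber [Fintype V] {m : ℕ}
    (h : ∀ S : Finset V, IsDeterminingSet G (S : Set V) → m ≤ #S) : m ≤ detNumber G := by
  obtain ⟨S, hS, hdet⟩ := exists_isDeterminingSet_card_eq_detNumber (G := G)
  exact hS ▸ h S hdet

end DeterminingSet

theorem Finset.map_swap_eq_self {α : Type*} [DecidableEq α] {s : Finset α} {x y : α}
    (h : x ∈ s ↔ y ∈ s) : s.map (Equiv.swap x y).toEmbedding = s := by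
  ext z
  rw [mem_map_equiv, Equiv.symm_swap, Equiv.swap_apply_def]
  split_ifs <;> simp_all

namespace kneserGraph

variable {n k : ℕ}

def autOfPerm (σ : Equiv.Perm (Fin n)) : kneserGraph n k ≃g kneserGraph n k where
  toEquiv := σ.finsetCongr.subtypeEquiv fun s => by simp [Equiv.finsetCongr_apply]
  map_rel_iff' {a b} := by
    simp only [kneserGraph, Equiv.subtypeEquiv_apply, Equiv.finsetCongr_apply, ne_eq,
      disjoint_map, Subtype.ext_iff, (map_injective σ.toEmbedding).eq_iff]

@[simp]
theorem coe_autOfPerm_apply (σ : Equiv.Perm (Fin n)) (v : {s : Finset (Fin n) // #s = k}) :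
    (autOfPerm σ v : Finset (Fin n)) = v.1.map σ.toEmbedding :=
  rfl

theorem exists_autOfPerm_swap_apply_ne (hk : 1 ≤ k) (hkn : k < n) {x y : Fin n} (hxy : x ≠ y) :
    ∃ v : {s : Finset (Fin n) // #s = k}, autOfPerm (Equiv.swap x y) v ≠ v := by
  obtain ⟨v, hxv, hvy, hv⟩ := exists_subsuperset_card_eq (s := {x}) (t := univ.erase y) (n := k)
    (by simpa using hxy) (by simpa using hk)
    (by rw [card_erase_of_mem (mem_univ y), card_univ, Fintype.card_fin]; omega)
  refine ⟨⟨v, hv⟩, fun hfix => ?_⟩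
  have hyv : y ∈ (autOfPerm (Equiv.swap x y) ⟨v, hv⟩ : Finset (Fin n)) :=
    mem_map.2 ⟨x, singleton_subset_iff.1 hxv, Equiv.swap_apply_left x y⟩
  rw [hfix] at hyv
  exact notMem_erase y univ (hvy hyv)

theorem not_isDeterminingSet_of_mem_iff_mem (hk : 1 ≤ k) (hkn : k < n)
    {S : Set {s : Finset (Fin n) // #s = k}} {x y : Fin n} (hxy : x ≠ y)
    (hS : ∀ v ∈ S, x ∈ v.1 ↔ y ∈ v.1) : ¬IsDeterminingSet (kneserGraph n k) S := by
  intro hdet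
  obtain ⟨w, hw⟩ := exists_autOfPerm_swap_apply_ne hk hkn hxy
  have hid := hdet (autOfPerm (Equiv.swap x y)) (RelIso.refl _)
    fun v hv => Subtype.ext (map_swap_eq_self (hS v hv))
  exact hw (by rw [hid]; rfl)

theorem not_isDeterminingSet_of_two_pow_card_lt (hk : 1 ≤ k) (hkn : k < n)
    (S : Finset {s : Finset (Fin n) // #s = k}) (hS : 2 ^ #S < n) :
    ¬IsDeterminingSet (kneserGraph n k) (S : Set _) := by
  have hcard : Fintype.card (S → Bool) < Fintype.card (Fin n) := by simpa using hS
  obtain ⟨x, y, hxy, hf⟩ :=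
    Fintype.exists_ne_map_eq_of_card_lt (fun z (v : S) => decide (z ∈ v.1.1)) hcard
  exact not_isDeterminingSet_of_mem_iff_mem hk hkn hxy fun v hv =>
    decide_eq_decide.1 (congrFun hf ⟨v, hv⟩)

theorem not_isDeterminingSet_of_card_mul_add_two_le (hk : 1 ≤ k) (hkn : k < n)
    (S : Finset {s : Finset (Fin n) // #s = k}) (hS : #S * k + 2 ≤ n) :
    ¬IsDeterminingSet (kneserGraph n k) (S : Set _) := by
  have hcover : #(S.biUnion Subtype.val) ≤ #S * k :=
    card_biUnion_le_card_mul _ _ _ fun v _ => v.2.le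
  have huncovered : 1 < #(S.biUnion Subtype.val)ᶜ := by rw [card_compl, Fintype.card_fin]; omega
  obtain ⟨x, hx, y, hy, hxy⟩ := one_lt_card.1 huncovered
  simp only [mem_compl, mem_biUnion, not_exists, not_and] at hx hy
  exact not_isDeterminingSet_of_mem_iff_mem hk hkn hxy fun v hv =>
    iff_of_false (hx v hv) (hy v hv)

theorem detNumber_zero : detNumber (kneserGraph n 0) = 0 := by
  have hsub : Fintype.card {s : Finset (Fin n) // #s = 0} ≤ 1 :=
    Fintype.card_le_one_iff_subsingleton.2
      ⟨fun a b => Subtype.ext (by rw [card_eq_zero.1 a.2, card_eq_zero.1 b.2])⟩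
  exact Nat.eq_zero_of_le_zero (detNumber_le (isDeterminingSet_of_card_le_card_add_one ∅ hsub))

end kneserGraph

theorem stmt_15 (n k : ℕ) (hn : 2 * k + 1 ≤ n) :
    detNumber (kneserGraph n k) = 2 ↔ n = 3 ∧ k = 1 := by
  constructor
  · intro h2
    rcases Nat.eq_zero_or_pos k with rfl | hk
    · simp [kneserGraph.detNumber_zero] at h2
    obtain ⟨S, hS, hdet⟩ := exists_isDeterminingSet_card_eq_detNumber (G := kneserGraph n k)
    rw [h2] at hS
    by_contra hne
    rcases (show k = 1 ∨ 2 ≤ k by omega) with rfl | hk2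
    · exact kneserGraph.not_isDeterminingSet_of_card_mul_add_two_le hk (by omega) S (by omega)
        hdet
    · exact kneserGraph.not_isDeterminingSet_of_two_pow_card_lt hk (by omega) S
        (by rw [hS]; omega) hdet
  · rintro ⟨rfl, rfl⟩
    refine le_antisymm ?_ (le_detNumber fun S hS => ?_)
    · exact detNumber_le (S := {⟨{0}, rfl⟩, ⟨{1}, rfl⟩})
        (isDeterminingSet_of_card_le_card_add_one _ (by decide)) |>.trans (by decide)
    · by_contra! hS2
      exact kneserGraph.not_isDeterminingSet_of_card_mul_add_two_le le_rfl (by norm_num) S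
        (by omega) hS
end
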